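/- Let n, η : Ω → ℝ^m and x : Ω → ℝ^k be random vectors on a probability space (Ω, F, P) with square-integrable components, suppose n is independent of the pair (x, η), and suppose E[n_i] = 1 for every i. Let A ∈ ℝ^{m×k} and let e = (n − 1) ⊙ (Ax) + η be the embedded error. Then for all indices i, j, cov(e_i, x_j) = cov(η_i, x_j); that is, the cross-covariance satisfies Γ_ex = Γ_ηx. -/

import Mathlib

/-! Write `e i = (n i - 1) * (A x) i + η i`. As `n` is independent of `(x, η)` and `n i - 1` is
centred, `E[(n i - 1) * g(x)] = E[n i - 1] * E[g(x)] = 0`, both for `g(x) = (A x) i * x j` and for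
`g(x) = (A x) i`. Hence `E[e i x j] = E[η i x j]` and `E[e i] = E[η i]`. -/

open MeasureTheory ProbabilityTheory Matrix
open scoped NNReal ENNReal

lemma memLp_mulVec_apply {Ω ι κ : Type*} [MeasurableSpace Ω] [Fintype κ] {P : Measure Ω}
    {p : ℝ≥0∞} {x : Ω → κ → ℝ} (hx : ∀ l, MemLp (fun ω => x ω l) p P)
    (A : Matrix ι κ ℝ) (i : ι) :
    MemLp (fun ω => (A *ᵥ x ω) i) p P := by
  simpa [mulVec, dotProduct] using
    memLp_finsetSum Finset.univ fun l _ => (hx l).const_mul (A i l)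

lemma measurable_mulVec_apply {ι κ : Type*} [Fintype κ] (A : Matrix ι κ ℝ) (i : ι) :
    Measurable fun v : κ → ℝ => (A *ᵥ v) i :=
  ((continuous_apply i).comp (continuous_const.matrix_mulVec continuous_id)).measurable

lemma integral_mul_add_eq_of_indepFun {Ω : Type*} [MeasurableSpace Ω] {μ : Measure Ω}
    {f g h : Ω → ℝ} (hfg : IndepFun f g μ) (hf : Integrable f μ) (hf0 : ∫ ω, f ω ∂μ = 0)
    (hg : Integrable g μ) (hh : Integrable h μ) :
    ∫ ω, f ω * g ω + h ω ∂μ = ∫ ω, h ω ∂μ := by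
  rw [integral_add (f := fun ω => f ω * g ω) (hfg.integrable_mul hf hg) hh,
    hfg.integral_fun_mul_eq_mul_integral hf.aestronglyMeasurable hg.aestronglyMeasurable,
    hf0, zero_mul, zero_add]

/-- Cross-covariance of the embedded error `e = (n - 1) ⊙ (A x) + η` with `x`:
if `n` is independent of the pair `(x, η)`, the components are square-integrable and
`E[n i] = 1`, then `cov(e i, x j) = cov(η i, x j)`, i.e. `Γ_ex = Γ_ηx`. -/
theorem embedded_error_cross_covariance {Ω : Type*} [MeasurableSpace Ω]
    (P : Measure Ω) [IsProbabilityMeasure P] {m k : ℕ}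
    (n η : Ω → Fin m → ℝ) (x : Ω → Fin k → ℝ)
    (hn : Measurable n) (hη : Measurable η) (hx : Measurable x)
    (hn2 : ∀ i, MemLp (fun ω => n ω i) 2 P)
    (hη2 : ∀ i, MemLp (fun ω => η ω i) 2 P)
    (hx2 : ∀ j, MemLp (fun ω => x ω j) 2 P)
    (hindep : Measure.map (fun ω => (n ω, (x ω, η ω))) P
        = (Measure.map n P).prod (Measure.map (fun ω => (x ω, η ω)) P))
    (hnmean : ∀ i, ∫ ω, n ω i ∂P = 1)
    (A : Matrix (Fin m) (Fin k) ℝ) (i : Fin m) (j : Fin k) :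
    let e : Ω → Fin m → ℝ := fun ω i => (n ω i - 1) * A.mulVec (x ω) i + η ω i
    (∫ ω, e ω i * x ω j ∂P) - (∫ ω, e ω i ∂P) * (∫ ω, x ω j ∂P)
      = (∫ ω, η ω i * x ω j ∂P) - (∫ ω, η ω i ∂P) * (∫ ω, x ω j ∂P) := by
  intro e
  have hI : IndepFun n (fun ω => (x ω, η ω)) P :=
    (indepFun_iff_map_prod_eq_prod_map_map hn.aemeasurable
      (hx.prodMk hη).aemeasurable).mpr hindep
  have hindep_x : ∀ ψ : (Fin k → ℝ) → ℝ, Measurable ψ →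
      IndepFun (fun ω => n ω i - 1) (fun ω => ψ (x ω)) P := fun ψ hψ =>
    hI.comp ((measurable_pi_apply i).sub measurable_const) (hψ.comp measurable_fst)
  have hcentred : Integrable (fun ω => n ω i - 1) P :=
    ((hn2 i).integrable one_le_two).sub (integrable_const 1)
  have hcentred0 : ∫ ω, n ω i - 1 ∂P = 0 := by
    rw [integral_sub ((hn2 i).integrable one_le_two) (integrable_const 1), hnmean i]
    simp
  have hAx := memLp_mulVec_apply hx2 A i
  have hcross : ∫ ω, e ω i * x ω j ∂P = ∫ ω, η ω i * x ω j ∂P := by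
    calc ∫ ω, e ω i * x ω j ∂P
        = ∫ ω, (n ω i - 1) * ((A *ᵥ x ω) i * x ω j) + η ω i * x ω j ∂P := by
          congr 1 with ω
          simp only [e]
          ring
      _ = ∫ ω, η ω i * x ω j ∂P := integral_mul_add_eq_of_indepFun
          (hindep_x _ ((measurable_mulVec_apply A i).mul (measurable_pi_apply j)))
          hcentred hcentred0 (hAx.integrable_mul (hx2 j)) ((hη2 i).integrable_mul (hx2 j))
  have hmean : ∫ ω, e ω i ∂P = ∫ ω, η ω i ∂P :=
    integral_mul_add_eq_of_indepFun (hindep_x _ (measurable_mulVec_apply A i))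
      hcentred hcentred0 (hAx.integrable one_le_two) ((hη2 i).integrable one_le_two)
  rw [hcross, hmean]
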